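/- arXiv:2401.12272 — 2 statements merged into one kernel-verified Lean document; each statement's English description precedes it below -/
import Mathlib

section
/- Let h, ĥ1, ĥ2, h̃ : [0,1]^d → ℝ and real numbers e1 ≥ e2 ≥ 0. Suppose that for every x ∈ [0,1]^d, |h(x) − ĥ1(x)| ≤ e1 and |h(x) + h̃(x) − ĥ2(x)| ≤ e2. Define ĥ(x) = ĥ1(x) + sgn(ĥ2(x) − ĥ1(x))·min(|ĥ2(x) − ĥ1(x)|, e1). Then for every x ∈ [0,1]^d, |ĥ(x) − h(x)| ≤ min(2e1, e2 + min(|h̃(x)|, 2e1)). -/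
theorem stmt2 {d : ℕ} (h h1 h2 ht : (Fin d → ℝ) → ℝ) (e1 e2 : ℝ)
    (he2 : 0 ≤ e2) (he12 : e2 ≤ e1)
    (H1 : ∀ x ∈ Set.Icc (0 : Fin d → ℝ) 1, |h x - h1 x| ≤ e1)
    (H2 : ∀ x ∈ Set.Icc (0 : Fin d → ℝ) 1, |h x + ht x - h2 x| ≤ e2) :
    ∀ x ∈ Set.Icc (0 : Fin d → ℝ) 1,
      |(h1 x + Real.sign (h2 x - h1 x) * min |h2 x - h1 x| e1) - h x|
        ≤ min (2 * e1) (e2 + min |ht x| (2 * e1)) := by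
  intro x hx
  have he1 : (0:ℝ) ≤ e1 := le_trans he2 he12
  have A := H1 x hx
  have B0 := H2 x hx
  have B := H2 x hx
  rw [abs_le] at A B
  set s := h2 x - h1 x with hs
  have hsign : Real.sign s * min |s| e1 = max (-e1) (min s e1) := by
    rcases lt_trichotomy s 0 with hlt | heq | hgt
    · rw [Real.sign_of_neg hlt, abs_of_neg hlt]
      rcases le_total (-s) e1 with h' | h'
      · rw [min_eq_left h', min_eq_left (by linarith), max_eq_right (by linarith)]
        ring
      · rw [min_eq_right h', min_eq_left (by linarith), max_eq_left (by linarith)]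
        ring
    · simp [heq, Real.sign_zero, min_eq_left he1, max_eq_right (by linarith : -e1 ≤ (0:ℝ))]
    · rw [Real.sign_of_pos hgt, abs_of_pos hgt, one_mul,
        max_eq_right (le_min (by linarith) (by linarith))]
  rw [hsign]
  set m := max (-e1) (min s e1) with hm
  have hm1 : -e1 ≤ m := le_max_left _ _
  have hm2 : m ≤ e1 := max_le (by linarith) (min_le_right _ _)
  -- key projection bound
  have hproj : |m - (h x - h1 x)| ≤ |s - (h x - h1 x)| := by
    rcases le_total s e1 with h1' | h1'
    · rcases le_total (-e1) s with h2' | h2'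
      · rw [hm, min_eq_left h1', max_eq_right h2']
      · rw [hm, max_eq_left (by rw [min_eq_left h1']; exact h2')]
        rw [abs_of_nonpos (by linarith), abs_of_nonpos (by linarith)]
        linarith
    · rw [hm, min_eq_right h1', max_eq_right (by linarith : -e1 ≤ e1)]
      rw [abs_of_nonneg (by linarith), abs_of_nonneg (by linarith)]
      linarith
  have hbc : |s - (h x - h1 x)| ≤ |ht x| + e2 := by
    have : s - (h x - h1 x) = ht x - (h x + ht x - h2 x) := by rw [hs]; ring
    rw [this]
    calc |ht x - (h x + ht x - h2 x)| ≤ |ht x| + |h x + ht x - h2 x| := abs_sub _ _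
      _ ≤ |ht x| + e2 := add_le_add_right B0 _
  have key1 : |h1 x + m - h x| ≤ 2 * e1 := by
    rw [abs_le]; constructor <;> linarith [A.1, A.2]
  have key2 : |h1 x + m - h x| ≤ e2 + |ht x| := by
    have : h1 x + m - h x = m - (h x - h1 x) := by ring
    rw [this]
    linarith [hproj.trans hbc]
  rcases le_total |ht x| (2 * e1) with h3 | h3
  · rw [min_eq_left h3]
    exact le_min key1 (by linarith)
  · rw [min_eq_right h3]
    exact le_min key1 (by linarith)
end

section
/- Let h, ĥ1, ĥ2, h̃ : [0,1]^d → ℝ be measurable functions and real numbers e1 ≥ e2 ≥ 0, e2' ≥ 0. Suppose sup_{x∈[0,1]^d} |h(x) − ĥ1(x)| ≤ e1, sup_{x∈[0,1]^d} |h(x) + h̃(x) − ĥ2(x)| ≤ e2, and ∫_{[0,1]^d} |h̃(x)| dx ≤ e2'. Define ĥ(x) = ĥ1(x) + sgn(ĥ2(x) − ĥ1(x))·min(|ĥ2(x) − ĥ1(x)|, e1). Then (∫_{[0,1]^d} (ĥ(x) − h(x))^2 dx)^{1/2} ≤ min(e2 + √(4·e1·e2'), 2e1). -/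
open MeasureTheory

lemma measurable_realSign : Measurable Real.sign := by
  unfold Real.sign
  exact Measurable.ite measurableSet_Iio measurable_const
    (Measurable.ite (measurableSet_Ioi (a := (0:ℝ))) measurable_const measurable_const)

lemma sign_mul_abs' (x : ℝ) : Real.sign x * |x| = x := by
  rcases lt_trichotomy x 0 with h | h | h
  · rw [Real.sign_of_neg h, abs_of_neg h]; ring
  · simp [h]
  · rw [Real.sign_of_pos h, abs_of_pos h]; ring

lemma key_pt (a b c t e1 e2 : ℝ) (he1 : 0 ≤ e1) (hab : |a - b| ≤ e1)
    (hct : |a + t - c| ≤ e2) :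
    |(b + Real.sign (c - b) * min |c - b| e1) - a| ≤ e2 + min |t| (2*e1) ∧
    |(b + Real.sign (c - b) * min |c - b| e1) - a| ≤ 2*e1 := by
  have he2 : 0 ≤ e2 := le_trans (abs_nonneg _) hct
  obtain ⟨hab1, hab2⟩ := abs_le.1 hab
  obtain ⟨hct1, hct2⟩ := abs_le.1 hct
  have ht1 := le_abs_self t
  have ht2 := neg_abs_le t
  constructor
  · rw [abs_le]
    rcases min_cases |t| (2*e1) with ⟨hm, hm'⟩ | ⟨hm, hm'⟩ <;> rw [hm] <;>
    rcases le_or_gt |c - b| e1 with hle | hgt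
    · rw [min_eq_left hle, sign_mul_abs']
      constructor <;> linarith
    · obtain ⟨hcb1, hcb2⟩ := abs_le.1 (le_refl |c - b|)
      rw [min_eq_right hgt.le]
      rcases lt_trichotomy (c - b) 0 with hlt | h0 | hpos
      · rw [Real.sign_of_neg hlt]; rw [abs_of_neg hlt] at hgt
        constructor <;> linarith
      · rw [h0, abs_zero] at hgt; linarith
      · rw [Real.sign_of_pos hpos]; rw [abs_of_pos hpos] at hgt
        constructor <;> linarith
    · rw [min_eq_left hle, sign_mul_abs']
      obtain ⟨hcb1, hcb2⟩ := abs_le.1 hle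
      constructor <;> linarith
    · rw [min_eq_right hgt.le]
      rcases lt_trichotomy (c - b) 0 with hlt | h0 | hpos
      · rw [Real.sign_of_neg hlt]
        constructor <;> linarith
      · rw [h0, abs_zero] at hgt; linarith
      · rw [Real.sign_of_pos hpos]
        constructor <;> linarith
  · have hs : |Real.sign (c - b)| ≤ 1 := by
      rcases Real.sign_apply_eq (c - b) with h' | h' | h' <;> rw [h'] <;> norm_num
    have hb : |Real.sign (c - b) * min |c - b| e1| ≤ e1 := by
      rw [abs_mul]
      calc |Real.sign (c-b)| * |min |c - b| e1| ≤ 1 * e1 := by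
            apply mul_le_mul hs _ (abs_nonneg _) zero_le_one
            rw [abs_of_nonneg (le_min (abs_nonneg _) he1)]; exact min_le_right _ _
        _ = e1 := one_mul e1
    obtain ⟨hb1, hb2⟩ := abs_le.1 hb
    rw [abs_le]; constructor <;> linarith

theorem stmt4 {d : ℕ} (h h1 h2 ht : (Fin d → ℝ) → ℝ) (e1 e2 e2' : ℝ)
    (he2 : 0 ≤ e2) (he12 : e2 ≤ e1) (he2' : 0 ≤ e2')
    (mh : Measurable h) (mh1 : Measurable h1) (mh2 : Measurable h2) (mht : Measurable ht)
    (H1 : ∀ x ∈ Set.Icc (0 : Fin d → ℝ) 1, |h x - h1 x| ≤ e1)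
    (H2 : ∀ x ∈ Set.Icc (0 : Fin d → ℝ) 1, |h x + ht x - h2 x| ≤ e2)
    (hint : IntegrableOn (fun x => |ht x|) (Set.Icc (0 : Fin d → ℝ) 1))
    (hL1 : (∫ x in Set.Icc (0 : Fin d → ℝ) 1, |ht x|) ≤ e2') :
    (∫ x in Set.Icc (0 : Fin d → ℝ) 1,
        ((h1 x + Real.sign (h2 x - h1 x) * min |h2 x - h1 x| e1) - h x) ^ 2) ^ ((1 : ℝ) / 2)
      ≤ min (e2 + Real.sqrt (4 * e1 * e2')) (2 * e1) := by
  have he1 : 0 ≤ e1 := le_trans he2 he12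
  set S := Set.Icc (0 : Fin d → ℝ) 1 with hSdef
  have hS : MeasurableSet S := measurableSet_Icc
  have hvol : volume S = 1 := by simp [hSdef, Real.volume_Icc_pi]
  set F : (Fin d → ℝ) → ℝ :=
    fun x => (h1 x + Real.sign (h2 x - h1 x) * min |h2 x - h1 x| e1) - h x with hFdef
  set m : (Fin d → ℝ) → ℝ := fun x => min |ht x| (2*e1) with hmdef
  have key : ∀ x ∈ S, |F x| ≤ e2 + m x ∧ |F x| ≤ 2*e1 := fun x hx =>
    key_pt (h x) (h1 x) (h2 x) (ht x) e1 e2 he1 (H1 x hx) (H2 x hx)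
  have hmF : Measurable F :=
    ((mh1.add ((measurable_realSign.comp (mh2.sub mh1)).mul
      (((mh2.sub mh1).abs).min measurable_const))).sub mh)
  have hm0 : ∀ x, 0 ≤ m x := fun x => le_min (abs_nonneg _) (by linarith)
  have hconst : ∀ C : ℝ, IntegrableOn (fun _ => C) S volume := fun C =>
    integrableOn_const (by rw [hvol]; exact ENNReal.one_ne_top)
  have hmi : IntegrableOn m S := by
    apply (hconst (2*e1)).mono' (mht.abs.min measurable_const).aestronglyMeasurable
    filter_upwards with x
    rw [Real.norm_eq_abs, abs_of_nonneg (hm0 x)]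
    exact min_le_right _ _
  have hF2i : IntegrableOn (fun x => F x ^ 2) S := by
    apply (hconst ((2*e1)^2)).mono' (hmF.pow_const 2).aestronglyMeasurable
    rw [ae_restrict_iff' hS]
    filter_upwards with x hx
    rw [Real.norm_eq_abs, abs_of_nonneg (sq_nonneg _), ← sq_abs]
    exact pow_le_pow_left₀ (abs_nonneg _) (key x hx).2 2
  have hintC : ∀ C : ℝ, (∫ _ in S, C) = C := by
    intro C; rw [setIntegral_const]; simp [Measure.real, hvol]
  -- integral of m bounds
  set I := ∫ x in S, m x with hIdef
  have hI0 : 0 ≤ I := setIntegral_nonneg hS fun x _ => hm0 x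
  have hIe2' : I ≤ e2' := by
    refine le_trans (setIntegral_mono_on hmi hint hS fun x _ => min_le_left _ _) hL1
  have hI2e1 : I ≤ 2*e1 := by
    refine le_trans (setIntegral_mono_on hmi (hconst (2*e1)) hS fun x _ => min_le_right _ _) ?_
    rw [hintC]
  -- bound 1: ∫ F² ≤ (2e1)²
  have hB1 : (∫ x in S, F x ^ 2) ≤ (2*e1)^2 := by
    refine le_trans (setIntegral_mono_on hF2i (hconst ((2*e1)^2)) hS fun x hx => ?_) ?_
    · rw [← sq_abs]; exact pow_le_pow_left₀ (abs_nonneg _) (key x hx).2 2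
    · rw [hintC]
  -- bound 2
  have hB2 : (∫ x in S, F x ^ 2) ≤ e2^2 + (2*e2 + 2*e1) * I := by
    have hptsq : ∀ x ∈ S, F x ^ 2 ≤ e2^2 + (2*e2 + 2*e1) * m x := by
      intro x hx
      have h1' := (key x hx).1
      have h2' := hm0 x
      have h3' : m x ≤ 2*e1 := min_le_right _ _
      nlinarith [sq_abs (F x), abs_nonneg (F x)]
    have hgint : IntegrableOn (fun x => e2^2 + (2*e2 + 2*e1) * m x) S :=
      (hconst (e2^2)).add (hmi.const_mul _)
    refine le_trans (setIntegral_mono_on hF2i hgint hS hptsq) ?_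
    rw [integral_add (hconst (e2^2)) (hmi.const_mul _), hintC, integral_const_mul]
  -- finish
  set s := Real.sqrt (4 * e1 * e2') with hsdef
  have hs0 : 0 ≤ s := Real.sqrt_nonneg _
  have hs2 : s^2 = 4 * e1 * e2' := Real.sq_sqrt (by positivity)
  have hIs : I ≤ s := by
    have hI2 : I^2 ≤ 4 * e1 * e2' := by nlinarith
    calc I = Real.sqrt (I^2) := (Real.sqrt_sq hI0).symm
      _ ≤ s := Real.sqrt_le_sqrt hI2
  rw [show ((1:ℝ)/2) = (2:ℝ)⁻¹ by norm_num]
  apply le_min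
  · calc (∫ x in S, F x ^ 2) ^ ((2:ℝ)⁻¹)
        ≤ ((e2 + s)^2) ^ ((2:ℝ)⁻¹) := by
          apply Real.rpow_le_rpow (setIntegral_nonneg hS fun x _ => sq_nonneg _) _ (by norm_num)
          nlinarith [mul_le_mul_of_nonneg_left hIs (by linarith : (0:ℝ) ≤ 2*e2),
            mul_le_mul_of_nonneg_left hIe2' (by linarith : (0:ℝ) ≤ 2*e1)]
      _ = e2 + s := by
          rw [← Real.rpow_natCast (e2 + s) 2, ← Real.rpow_mul (by positivity)]
          norm_num
  · calc (∫ x in S, F x ^ 2) ^ ((2:ℝ)⁻¹)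
        ≤ ((2*e1)^2) ^ ((2:ℝ)⁻¹) := by
          apply Real.rpow_le_rpow (setIntegral_nonneg hS fun x _ => sq_nonneg _) hB1 (by norm_num)
      _ = 2*e1 := by
          rw [← Real.rpow_natCast (2*e1) 2, ← Real.rpow_mul (by positivity)]
          norm_num
end
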